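/- Let A⁺, A⁻ : ℝ → ℝ and u⁺, u⁻, û, c ∈ ℝ. Assume the Rankine–Hugoniot condition A⁺(u⁺) = A⁻(u⁻), that û lies strictly between u⁻ and u⁺, that c lies strictly between u⁻ and u⁺ with c ≠ û, and that the Kruzkov entropy inequality holds at c. Then sign(u⁺−u⁻)·A⁺(u⁺) ≤ sign(u⁺−u⁻)·[A⁺(c)·𝟙_{(û,u⁺)}(c) + A⁻(c)·𝟙_{(û,u⁻)}(c)]. -/

import Mathlib

/-! Since `û` and `c` both lie strictly between `u⁻` and `u⁺`, every sign in the Kruzkov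
inequality equals `±sign(u⁺ − u⁻)`. With the Rankine–Hugoniot condition the inequality becomes
`s·A − 2s·A⁺(c)𝟙⁺ ≤ −s·A + 2s·A⁻(c)𝟙⁻` for `s = sign(u⁺ − u⁻)` and `A = A⁺(u⁺)`, which is
twice the claim. -/

open MeasureTheory Filter Set

/-- The Kruzkov entropy inequality at `c` for data `(um, up, uh)`:
`A⁺(u⁺)·sign(u⁺−c) − 2·sign(u⁺−û)·A⁺(c)·𝟙_{(û,u⁺)}(c) ≤
 A⁻(u⁻)·sign(u⁻−c) − 2·sign(u⁻−û)·A⁻(c)·𝟙_{(û,u⁻)}(c)`. -/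
def KruzkovIneq (Ap Am : ℝ → ℝ) (um up uh c : ℝ) : Prop :=
  Ap up * Real.sign (up - c) -
      2 * Real.sign (up - uh) * Ap c * Set.indicator (Set.uIoo uh up) (1 : ℝ → ℝ) c
    ≤ Am um * Real.sign (um - c) -
      2 * Real.sign (um - uh) * Am c * Set.indicator (Set.uIoo uh um) (1 : ℝ → ℝ) c

theorem Real.sign_sub_eq_of_mem_uIoo {a b x : ℝ} (hx : x ∈ uIoo a b) :
    Real.sign (b - x) = Real.sign (b - a) := by
  rcases lt_or_gt_of_ne (nonempty_uIoo.mp ⟨x, hx⟩) with hab | hab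
  · rw [uIoo_of_lt hab] at hx
    rw [Real.sign_of_pos (sub_pos.mpr hx.2), Real.sign_of_pos (sub_pos.mpr hab)]
  · rw [uIoo_of_gt hab] at hx
    rw [Real.sign_of_neg (sub_neg.mpr hx.1), Real.sign_of_neg (sub_neg.mpr hab)]

theorem Real.sign_sub_eq_neg_of_mem_uIoo {a b x : ℝ} (hx : x ∈ uIoo a b) :
    Real.sign (a - x) = -Real.sign (b - a) := by
  rw [Real.sign_sub_eq_of_mem_uIoo (uIoo_comm a b ▸ hx), ← Real.sign_neg, neg_sub]

theorem stmt_6_general (Ap Am : ℝ → ℝ) (up um uh c : ℝ)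
    (hRH : Ap up = Am um)
    (huh : uh ∈ Set.uIoo um up)
    (hc : c ∈ Set.uIoo um up)
    (hkruz : KruzkovIneq Ap Am um up uh c) :
    Real.sign (up - um) * Ap up ≤
      Real.sign (up - um) *
        (Ap c * Set.indicator (Set.uIoo uh up) (1 : ℝ → ℝ) c +
         Am c * Set.indicator (Set.uIoo uh um) (1 : ℝ → ℝ) c) := by
  unfold KruzkovIneq at hkruz
  rw [Real.sign_sub_eq_of_mem_uIoo hc, Real.sign_sub_eq_of_mem_uIoo huh,
    Real.sign_sub_eq_neg_of_mem_uIoo hc, Real.sign_sub_eq_neg_of_mem_uIoo huh, ← hRH] at hkruz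
  linarith

theorem stmt_6 (Ap Am : ℝ → ℝ) (up um uh c : ℝ)
    (hRH : Ap up = Am um)
    (huh : uh ∈ Set.uIoo um up)
    (hc : c ∈ Set.uIoo um up) (hcuh : c ≠ uh)
    (hkruz : KruzkovIneq Ap Am um up uh c) :
    Real.sign (up - um) * Ap up ≤
      Real.sign (up - um) *
        (Ap c * Set.indicator (Set.uIoo uh up) (1 : ℝ → ℝ) c +
         Am c * Set.indicator (Set.uIoo uh um) (1 : ℝ → ℝ) c) :=
  stmt_6_general Ap Am up um uh c hRH huh hc hkruz
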